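/- arXiv:1806.00997 — 2 statements merged into one kernel-verified Lean document; each statement's English description precedes it below -/
import Mathlib

section
/- Let T ∈ ℝ, let a, b, σ be positive real constants, let γ ≥ 0 and ψ ≥ 0, and set k(x) := √(a² + 2(1+b·x)·σ²). Then for every t ≤ T, min(ψ, (k(γ)−a)/σ²) ≤ Φ(t,T;ψ,γ) ≤ max(ψ, (k(γ)−a)/σ²). -/
/-- k(x) := √(a² + 2(1+b·x)·σ²). -/
noncomputable def kfun (a b σ x : ℝ) : ℝ := Real.sqrt (a ^ 2 + 2 * (1 + b * x) * σ ^ 2)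

/-- The explicit solution Φ(t,T;ψ,γ) of the Riccati equation with constant coefficient γ. -/
noncomputable def Phi (a b σ ψ γ T t : ℝ) : ℝ :=
  ((kfun a b σ γ - a) / σ ^ 2 * (ψ + (a + kfun a b σ γ) / σ ^ 2) +
      (a + kfun a b σ γ) / σ ^ 2 * (ψ + (a - kfun a b σ γ) / σ ^ 2) *
        Real.exp (-(kfun a b σ γ) * (T - t))) /
    ((ψ + (a + kfun a b σ γ) / σ ^ 2) +
      ((kfun a b σ γ - a) / σ ^ 2 - ψ) * Real.exp (-(kfun a b σ γ) * (T - t)))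

/-! With `c = (k - a)/σ²`, `d = (a + k)/σ²` and `E = exp (-k (T - t)) ∈ (0, 1]`, one has
`Φ - ψ = (c - ψ)(ψ + d)(1 - E)/D` and `Φ - c = (ψ - c)(c + d)E/D` for the denominator
`D = (ψ + d)(1 - E) + (c + d)E > 0`, so `Φ` is a convex combination of `ψ` and `c`. -/

open Real Set

lemma abs_lt_kfun {a b σ x : ℝ} (hσ : σ ≠ 0) (hbx : 0 < 1 + b * x) : |a| < kfun a b σ x := by
  rw [← sqrt_sq_eq_abs, kfun]
  apply sqrt_lt_sqrt (sq_nonneg a)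
  have : 0 < σ ^ 2 := by positivity
  nlinarith

lemma riccati_ratio_mem_segment {ψ c d E : ℝ} (hψd : 0 ≤ ψ + d) (hcd : 0 < c + d)
    (hE0 : 0 < E) (hE1 : E ≤ 1) :
    (c * (ψ + d) + d * (ψ - c) * E) / ((ψ + d) + (c - ψ) * E) ∈ segment ℝ ψ c := by
  have hD : (ψ + d) + (c - ψ) * E = (ψ + d) * (1 - E) + (c + d) * E := by ring
  have hD_pos : 0 < (ψ + d) * (1 - E) + (c + d) * E :=
    add_pos_of_nonneg_of_pos (mul_nonneg hψd (sub_nonneg.2 hE1)) (mul_pos hcd hE0)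
  refine ⟨(c + d) * E / ((ψ + d) * (1 - E) + (c + d) * E),
    (ψ + d) * (1 - E) / ((ψ + d) * (1 - E) + (c + d) * E),
    by positivity, div_nonneg (mul_nonneg hψd (sub_nonneg.2 hE1)) hD_pos.le, ?_, ?_⟩
  · field_simp
    ring
  · rw [hD, smul_eq_mul, smul_eq_mul]
    field_simp
    ring

theorem Phi_bounds_general
    (T a b σ γ ψ : ℝ) (hb : 0 < b) (hσ : 0 < σ)
    (hγ : 0 ≤ γ) (hψ : 0 ≤ ψ) :
    ∀ t ≤ T,
      min ψ ((kfun a b σ γ - a) / σ ^ 2) ≤ Phi a b σ ψ γ T t ∧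
      Phi a b σ ψ γ T t ≤ max ψ ((kfun a b σ γ - a) / σ ^ 2) := by
  intro t ht
  have hk : |a| < kfun a b σ γ := abs_lt_kfun hσ.ne' (by nlinarith)
  set k := kfun a b σ γ
  have hE1 : exp (-k * (T - t)) ≤ 1 :=
    exp_le_one_iff.2 (by nlinarith [mul_nonneg (abs_nonneg a) (sub_nonneg.2 ht)])
  have hPhi : Phi a b σ ψ γ T t =
      ((k - a) / σ ^ 2 * (ψ + (a + k) / σ ^ 2) +
        (a + k) / σ ^ 2 * (ψ - (k - a) / σ ^ 2) * exp (-k * (T - t))) /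
      ((ψ + (a + k) / σ ^ 2) + ((k - a) / σ ^ 2 - ψ) * exp (-k * (T - t))) := by
    rw [Phi]
    ring
  have hmem := riccati_ratio_mem_segment (c := (k - a) / σ ^ 2) (d := (a + k) / σ ^ 2)
    (add_nonneg hψ (div_nonneg (by linarith [neg_abs_le a]) (sq_nonneg σ)))
    (by rw [← add_div]; exact div_pos (by linarith [abs_nonneg a]) (by positivity))
    (exp_pos _) hE1
  rw [← hPhi, segment_eq_uIcc] at hmem
  exact hmem

/-- for a, b, σ > 0, γ ≥ 0, ψ ≥ 0 and t ≤ T,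
min(ψ, (k(γ)−a)/σ²) ≤ Φ(t,T;ψ,γ) ≤ max(ψ, (k(γ)−a)/σ²). -/
theorem Phi_bounds
    (T a b σ γ ψ : ℝ) (ha : 0 < a) (hb : 0 < b) (hσ : 0 < σ)
    (hγ : 0 ≤ γ) (hψ : 0 ≤ ψ) :
    ∀ t ≤ T,
      min ψ ((kfun a b σ γ - a) / σ ^ 2) ≤ Phi a b σ ψ γ T t ∧
      Phi a b σ ψ γ T t ≤ max ψ ((kfun a b σ γ - a) / σ ^ 2) :=
  Phi_bounds_general T a b σ γ ψ hb hσ hγ hψ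
end

section
/- Let a, σ > 0, b ≥ 0, τ > 0, T ∈ ℝ, let w ∈ [0, (k(0)−a)/σ²) where k(x) := √(a² + 2(1+b·x)·σ²), let (φⱼ)ⱼ≥₀ be the solution of the recursive delayed Riccati system with final datum w, and define w̄₀ := (k(0)−a)/σ², w̄ⱼ₊₁ := max(w̄ⱼ, (k(w̄ⱼ)−a)/σ²), and L := lim_{j→∞} w̄ⱼ (which exists and is finite). Then for every j ≥ 0 and every t ∈ [T−(j+1)τ, T−jτ], 0 ≤ φⱼ(t) ≤ L, and moreover L ≤ max( (k(0)−a)/σ², (b − a + √((b−a)² + 2σ²))/σ² ). -/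
/-- The domain [T−(j+1)τ, T−jτ] of the j-th component of the recursive delayed
Riccati system. -/
def riccatiDom (T τ : ℝ) (j : ℕ) : Set ℝ :=
  Set.Icc (T - ((j : ℝ) + 1) * τ) (T - (j : ℝ) * τ)

/-- The recursive delayed Riccati system with delay τ, horizon T and final datum w. -/
def DelayedRiccatiSol (a b σ τ T w : ℝ) (φ : ℕ → ℝ → ℝ) : Prop :=
  φ 0 T = w ∧
  (∀ t ∈ riccatiDom T τ 0, HasDerivWithinAt (φ 0)
    (σ ^ 2 / 2 * (φ 0 t) ^ 2 + a * φ 0 t - 1) (riccatiDom T τ 0) t) ∧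
  (∀ j : ℕ, φ (j + 1) (T - ((j : ℝ) + 1) * τ) = φ j (T - ((j : ℝ) + 1) * τ)) ∧
  (∀ j : ℕ, ∀ t ∈ riccatiDom T τ (j + 1), HasDerivWithinAt (φ (j + 1))
    (σ ^ 2 / 2 * (φ (j + 1) t) ^ 2 + a * φ (j + 1) t - 1 - b * φ j (t + τ))
    (riccatiDom T τ (j + 1)) t)

open Set Filter Topology

section Barrier

variable {f f' : ℝ → ℝ} {A B : ℝ}

/-- Time reversal of `image_le_of_deriv_right_lt_deriv_boundary`. -/
theorem image_le_of_right_le_of_deriv_pos {c : ℝ}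
    (hd : ∀ t ∈ Icc A B, HasDerivWithinAt f (f' t) (Icc A B) t) (hB : f B ≤ c)
    (hc : ∀ t ∈ Icc A B, f t = c → 0 < f' t) :
    ∀ t ∈ Icc A B, f t ≤ c := by
  have hneg : MapsTo (fun s : ℝ => -s) (Icc (-B) (-A)) (Icc A B) := fun s hs =>
    ⟨by linarith [hs.2], by linarith [hs.1]⟩
  have hcont : ContinuousOn (fun s => f (-s)) (Icc (-B) (-A)) :=
    ContinuousOn.comp (g := f) (fun t ht => (hd t ht).continuousWithinAt) continuousOn_neg hneg
  have hderiv : ∀ s ∈ Ico (-B) (-A),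
      HasDerivWithinAt (fun s => f (-s)) (f' (-s) * -1) (Ici s) s := fun s hs =>
    ((hd (-s) (hneg (Ico_subset_Icc_self hs))).comp s (hasDerivAt_neg s).hasDerivWithinAt
      hneg).mono_of_mem_nhdsWithin (Icc_mem_nhdsGE_of_mem hs)
  intro t ht
  simpa using image_le_of_deriv_right_lt_deriv_boundary hcont hderiv (by simpa using hB)
    (fun _ => hasDerivAt_const _ c)
    (fun s hs hfs => by simpa using hc _ (hneg (Ico_subset_Icc_self hs)) hfs)
    (show -t ∈ Icc (-B) (-A) from ⟨by linarith [ht.2], by linarith [ht.1]⟩)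

theorem image_mem_Icc_of_right_mem_Icc {m M : ℝ}
    (hd : ∀ t ∈ Icc A B, HasDerivWithinAt f (f' t) (Icc A B) t) (hB : f B ∈ Icc m M)
    (hm : ∀ t ∈ Icc A B, f t = m → f' t < 0) (hM : ∀ t ∈ Icc A B, M < f t → 0 < f' t) :
    ∀ t ∈ Icc A B, f t ∈ Icc m M := by
  intro t ht
  constructor
  · have := image_le_of_right_le_of_deriv_pos (f := fun t => -f t) (c := -m)
      (fun t ht => (hd t ht).neg) (neg_le_neg hB.1)
      (fun t ht hft => neg_pos.2 (hm t ht (neg_inj.1 hft))) t ht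
    exact neg_le_neg_iff.1 this
  · refine le_of_forall_gt_imp_ge_of_dense fun c hc => ?_
    exact image_le_of_right_le_of_deriv_pos hd (hB.2.trans hc.le)
      (fun s hs hfs => hM s hs (hfs ▸ hc)) t ht

end Barrier

noncomputable def riccatiQuad (a σ y : ℝ) : ℝ := σ ^ 2 / 2 * y ^ 2 + a * y

/-- `(k(x) − a)/σ²`, the nonnegative root of `riccatiQuad a σ y = 1 + b x`. -/
noncomputable def riccatiRoot (a b σ x : ℝ) : ℝ := (kfun a b σ x - a) / σ ^ 2

section Riccati

variable {a b σ : ℝ}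

theorem strictMonoOn_riccatiQuad (ha : 0 < a) : StrictMonoOn (riccatiQuad a σ) (Ici 0) := by
  intro x hx y hy hxy
  simp only [mem_Ici] at hx hy
  unfold riccatiQuad
  nlinarith [mul_pos ha (sub_pos.2 hxy),
    mul_nonneg (sq_nonneg σ) (mul_nonneg (sub_nonneg.2 hxy.le) (add_nonneg hx hy))]

theorem image_mem_Icc_of_hasDerivWithinAt_riccatiQuad_sub {f r : ℝ → ℝ} {A B U : ℝ}
    (ha : 0 < a)
    (hd : ∀ t ∈ Icc A B, HasDerivWithinAt f (riccatiQuad a σ (f t) - r t) (Icc A B) t)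
    (hB : f B ∈ Icc 0 U) (hr : ∀ t ∈ Icc A B, 0 < r t)
    (hrU : ∀ t ∈ Icc A B, r t ≤ riccatiQuad a σ U) :
    ∀ t ∈ Icc A B, f t ∈ Icc 0 U := by
  refine image_mem_Icc_of_right_mem_Icc hd hB (fun t ht hft => ?_) (fun t ht hft => ?_)
  · simp [hft, riccatiQuad, hr t ht]
  · have hU : 0 ≤ U := hB.1.trans hB.2
    have := strictMonoOn_riccatiQuad (σ := σ) ha hU (hU.trans hft.le) hft
    linarith [hrU t ht]

theorem riccatiRoot_nonneg (hb : 0 ≤ b) {x : ℝ} (hx : 0 ≤ x) : 0 ≤ riccatiRoot a b σ x := by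
  have : a ≤ kfun a b σ x := Real.le_sqrt_of_sq_le (by nlinarith [mul_nonneg hb hx, sq_nonneg σ])
  exact div_nonneg (sub_nonneg.2 this) (sq_nonneg σ)

theorem riccatiQuad_riccatiRoot (hσ : σ ≠ 0) (hb : 0 ≤ b) {x : ℝ} (hx : 0 ≤ x) :
    riccatiQuad a σ (riccatiRoot a b σ x) = 1 + b * x := by
  have hk : kfun a b σ x ^ 2 = a ^ 2 + 2 * (1 + b * x) * σ ^ 2 :=
    Real.sq_sqrt (by nlinarith [mul_nonneg hb hx, sq_nonneg σ, sq_nonneg a])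
  unfold riccatiQuad riccatiRoot
  field_simp
  linear_combination hk

theorem riccatiRoot_monotone (hb : 0 ≤ b) : Monotone (riccatiRoot a b σ) := by
  intro x y hxy
  unfold riccatiRoot kfun
  gcongr

theorem le_riccatiQuad_of_riccatiRoot_le (ha : 0 < a) (hσ : σ ≠ 0) (hb : 0 ≤ b) {x y : ℝ}
    (hx : 0 ≤ x) (hxy : riccatiRoot a b σ x ≤ y) : 1 + b * x ≤ riccatiQuad a σ y := by
  have hroot := riccatiRoot_nonneg (σ := σ) (a := a) hb hx
  rw [← riccatiQuad_riccatiRoot hσ hb hx]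
  exact (strictMonoOn_riccatiQuad ha).monotoneOn hroot (hroot.trans hxy) hxy

theorem riccatiRoot_le_self (ha : 0 < a) (hσ : σ ≠ 0) (hb : 0 ≤ b) {x : ℝ}
    (hx : (b - a + √((b - a) ^ 2 + 2 * σ ^ 2)) / σ ^ 2 ≤ x) : riccatiRoot a b σ x ≤ x := by
  set s := √((b - a) ^ 2 + 2 * σ ^ 2)
  have hσ2 : 0 < σ ^ 2 := by positivity
  have hs : s ^ 2 = (b - a) ^ 2 + 2 * σ ^ 2 := Real.sq_sqrt (by positivity)
  have hsab : a - b ≤ s := by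
    linarith [neg_le_abs (b - a), Real.abs_le_sqrt (le_add_of_nonneg_right (by positivity) :
      (b - a) ^ 2 ≤ (b - a) ^ 2 + 2 * σ ^ 2)]
  rw [div_le_iff₀ hσ2] at hx
  have hx0 : 0 ≤ x := by nlinarith
  have hsq : s ^ 2 ≤ (x * σ ^ 2 - (b - a)) ^ 2 :=
    pow_le_pow_left₀ (Real.sqrt_nonneg _) (by linarith) 2
  have hquad : 1 + b * x ≤ riccatiQuad a σ x := by
    refine le_of_mul_le_mul_left ?_ hσ2
    unfold riccatiQuad
    linarith
  have hroot := riccatiRoot_nonneg (σ := σ) (a := a) hb hx0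
  rw [← riccatiQuad_riccatiRoot hσ hb hx0] at hquad
  exact ((strictMonoOn_riccatiQuad ha).le_iff_le hroot hx0).1 hquad

end Riccati

section Domain

variable {T τ t : ℝ} {j : ℕ}

theorem nonneg_of_mem_riccatiDom (ht : t ∈ riccatiDom T τ j) : 0 ≤ τ := by
  obtain ⟨h₁, h₂⟩ := ht
  linarith

theorem left_mem_riccatiDom (hτ : 0 ≤ τ) : T - ((j : ℝ) + 1) * τ ∈ riccatiDom T τ j :=
  ⟨le_rfl, by linarith⟩

theorem add_mem_riccatiDom (ht : t ∈ riccatiDom T τ (j + 1)) : t + τ ∈ riccatiDom T τ j := by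
  obtain ⟨h₁, h₂⟩ := ht
  push_cast at h₁ h₂
  exact ⟨by linarith, by linarith⟩

end Domain

theorem DelayedRiccatiSol.mem_Icc {a b σ τ T w : ℝ} {φ : ℕ → ℝ → ℝ} {wbar : ℕ → ℝ}
    (ha : 0 < a) (hσ : σ ≠ 0) (hb : 0 ≤ b) (hφ : DelayedRiccatiSol a b σ τ T w φ)
    (hw : w ∈ Icc 0 (wbar 0)) (hwbar0 : riccatiRoot a b σ 0 ≤ wbar 0)
    (hwbar : ∀ j, max (wbar j) (riccatiRoot a b σ (wbar j)) ≤ wbar (j + 1)) :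
    ∀ j, ∀ t ∈ riccatiDom T τ j, φ j t ∈ Icc 0 (wbar j) := by
  obtain ⟨hT, hderiv₀, hmatch, hderiv⟩ := hφ
  intro j
  induction j with
  | zero =>
    refine image_mem_Icc_of_hasDerivWithinAt_riccatiQuad_sub ha (r := fun _ => 1) hderiv₀
      (by simpa [hT] using hw) (fun _ _ => one_pos) fun _ _ => ?_
    simpa using le_riccatiQuad_of_riccatiRoot_le ha hσ hb le_rfl hwbar0
  | succ j ih =>
    intro t ht
    have hright := ih _ (left_mem_riccatiDom (nonneg_of_mem_riccatiDom ht))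
    refine image_mem_Icc_of_hasDerivWithinAt_riccatiQuad_sub ha
      (r := fun s => 1 + b * φ j (s + τ))
      (fun s hs => (hderiv j s hs).congr_deriv (sub_sub _ _ _)) ?_ (fun s hs => ?_)
      (fun s hs => ?_) t ht
    · rw [Nat.cast_succ, hmatch]
      exact ⟨hright.1, hright.2.trans ((le_max_left _ _).trans (hwbar j))⟩
    · have := (ih _ (add_mem_riccatiDom hs)).1
      positivity
    · calc 1 + b * φ j (s + τ) ≤ 1 + b * wbar j := by
            gcongr
            exact (ih _ (add_mem_riccatiDom hs)).2
        _ ≤ riccatiQuad a σ (wbar (j + 1)) :=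
          le_riccatiQuad_of_riccatiRoot_le ha hσ hb (hright.1.trans hright.2)
            ((le_max_right _ _).trans (hwbar j))

theorem delayed_riccati_uniform_bound_general
    (a b σ τ T w : ℝ) (ha : 0 < a) (hσ : 0 < σ) (hb : 0 ≤ b)
    (hw : w ∈ Set.Ico (0 : ℝ) ((kfun a b σ 0 - a) / σ ^ 2))
    (φ : ℕ → ℝ → ℝ) (hφ : DelayedRiccatiSol a b σ τ T w φ)
    (wbar : ℕ → ℝ)
    (hwbar0 : wbar 0 = (kfun a b σ 0 - a) / σ ^ 2)
    (hwbar : ∀ j : ℕ, wbar (j + 1) = max (wbar j) ((kfun a b σ (wbar j) - a) / σ ^ 2)) :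
    ∃ L : ℝ, Filter.Tendsto wbar Filter.atTop (nhds L) ∧
      (∀ j : ℕ, ∀ t ∈ riccatiDom T τ j, 0 ≤ φ j t ∧ φ j t ≤ L) ∧
      L ≤ max ((kfun a b σ 0 - a) / σ ^ 2)
        ((b - a + Real.sqrt ((b - a) ^ 2 + 2 * σ ^ 2)) / σ ^ 2) := by
  have hmono : Monotone wbar :=
    monotone_nat_of_le_succ fun j => (hwbar j).ge.trans' (le_max_left _ _)
  have hbound : ∀ j, wbar j ≤ max ((kfun a b σ 0 - a) / σ ^ 2)
      ((b - a + Real.sqrt ((b - a) ^ 2 + 2 * σ ^ 2)) / σ ^ 2) := by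
    intro j
    induction j with
    | zero => exact hwbar0.trans_le (le_max_left _ _)
    | succ j ih =>
      exact (hwbar j).trans_le <| max_le ih <| (riccatiRoot_monotone hb ih).trans
        (riccatiRoot_le_self ha hσ.ne' hb (le_max_right _ _))
  obtain ⟨L, hL⟩ : ∃ L, Tendsto wbar atTop (𝓝 L) :=
    ⟨_, tendsto_atTop_ciSup hmono ⟨_, forall_mem_range.2 hbound⟩⟩
  have hφbound := hφ.mem_Icc ha hσ.ne' hb ⟨hw.1, hw.2.le.trans_eq hwbar0.symm⟩ hwbar0.ge
    fun j => (hwbar j).ge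
  refine ⟨L, hL, fun j t ht => ?_, le_of_tendsto' hL hbound⟩
  exact ⟨(hφbound j t ht).1, (hφbound j t ht).2.trans (hmono.ge_of_tendsto hL j)⟩

/-- uniform boundedness of the recursive delayed Riccati system:
with w̄₀ := (k(0)−a)/σ² and w̄ⱼ₊₁ := max(w̄ⱼ, (k(w̄ⱼ)−a)/σ²), the limit
L := lim w̄ⱼ exists and is finite, 0 ≤ φⱼ(t) ≤ L on each domain, and
L ≤ max((k(0)−a)/σ², (b − a + √((b−a)² + 2σ²))/σ²). -/
theorem delayed_riccati_uniform_bound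
    (a b σ τ T w : ℝ) (ha : 0 < a) (hσ : 0 < σ) (hb : 0 ≤ b) (hτ : 0 < τ)
    (hw : w ∈ Set.Ico (0 : ℝ) ((kfun a b σ 0 - a) / σ ^ 2))
    (φ : ℕ → ℝ → ℝ) (hφ : DelayedRiccatiSol a b σ τ T w φ)
    (wbar : ℕ → ℝ)
    (hwbar0 : wbar 0 = (kfun a b σ 0 - a) / σ ^ 2)
    (hwbar : ∀ j : ℕ, wbar (j + 1) = max (wbar j) ((kfun a b σ (wbar j) - a) / σ ^ 2)) :
    ∃ L : ℝ, Filter.Tendsto wbar Filter.atTop (nhds L) ∧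
      (∀ j : ℕ, ∀ t ∈ riccatiDom T τ j, 0 ≤ φ j t ∧ φ j t ≤ L) ∧
      L ≤ max ((kfun a b σ 0 - a) / σ ^ 2)
        ((b - a + Real.sqrt ((b - a) ^ 2 + 2 * σ ^ 2)) / σ ^ 2) :=
  delayed_riccati_uniform_bound_general a b σ τ T w ha hσ hb hw φ hφ wbar hwbar0 hwbar
end
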